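/- Measuring implies the negation of ℧ (mho): if measuring holds, then for every sequence (f_α)_{α<ω₁} where each f_α is a continuous function from α into ω, there is a club C ⊆ ω₁ such that for every δ ∈ C, the image f_δ''C is a proper subset of ω (i.e., f_δ''C ≠ ω). -/

import Mathlib

noncomputable def omega1 : Ordinal := (Cardinal.aleph 1).ord

def IsLimitPointOf (X : Set Ordinal) (x : Ordinal) : Prop :=
  ∀ α < x, ∃ ε ∈ X, α < ε ∧ ε < x

def IsClosedIn (C : Set Ordinal) (δ : Ordinal) : Prop :=
  C ⊆ Set.Iio δ ∧ ∀ x, x ≠ 0 → x < δ → IsLimitPointOf C x → x ∈ C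

def IsClubIn (C : Set Ordinal) (δ : Ordinal) : Prop :=
  IsClosedIn C δ ∧ ∀ α < δ, ∃ ε ∈ C, α < ε

def IsClubOmega1 (C : Set Ordinal) : Prop := IsClubIn C omega1

def Measures (C : Set Ordinal) (Cs : Ordinal → Set Ordinal) : Prop :=
  ∀ δ ∈ C, ∃ α < δ,
    (∀ x ∈ C, x < δ → α ≤ x → x ∈ Cs δ) ∨ (∀ x ∈ C, α ≤ x → x ∉ Cs δ)


def Measuring : Prop :=
  ∀ Cs : Ordinal.{0} → Set Ordinal.{0}, (∀ δ < omega1, IsClosedIn (Cs δ) δ) →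
    ∃ C, IsClubOmega1 C ∧ Measures C Cs

/-!
Colour each point `x < δ` by the parity of `f δ x`. By continuity of `f δ`, the even-coloured
points form a closed subset of `δ`, so measuring yields a club `C` such that, for `δ ∈ C`, a
tail `C ∩ [α, δ)` is monochromatic. On that tail `f δ` misses every number of the other parity,
and on the compact initial segment `[0, α]` it takes only finitely many values; so some
number of the other parity is not attained on `C ∩ δ` at all.
-/

open Set

/-- Continuity of `g : δ → β` for the order topology on `δ` and the discrete topology on `β`. -/
def IsContinuousBelow {β : Type*} (g : Ordinal → β) (δ : Ordinal) : Prop :=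
  ∀ x < δ, Order.IsSuccLimit x → ∃ γ < x, ∀ y, γ ≤ y → y < x → g y = g x

lemma IsLimitPointOf.isSuccLimit {X : Set Ordinal} {x : Ordinal} (hx : x ≠ 0)
    (h : IsLimitPointOf X x) : Order.IsSuccLimit x := by
  refine Ordinal.isSuccLimit_iff.2 ⟨hx, Order.isSuccPrelimit_iff_succ_lt.2 fun y hy => ?_⟩
  obtain ⟨ε, -, hyε, hεx⟩ := h y hy
  exact (Order.succ_le_of_lt hyε).trans_lt hεx

namespace IsContinuousBelow

variable {β : Type*} {g : Ordinal → β} {δ : Ordinal}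

lemma isClosedIn_preimage (hg : IsContinuousBelow g δ) (S : Set β) :
    IsClosedIn {x | x < δ ∧ g x ∈ S} δ := by
  refine ⟨fun x hx => hx.1, fun x hx0 hxδ hlim => ⟨hxδ, ?_⟩⟩
  obtain ⟨γ, hγx, hconst⟩ := hg x hxδ (hlim.isSuccLimit hx0)
  obtain ⟨ε, hεS, hγε, hεx⟩ := hlim γ hγx
  exact hconst ε hγε.le hεx ▸ hεS.2

/-- Compactness of `[0, α]`. -/
lemma finite_image_Iic (hg : IsContinuousBelow g δ) {α : Ordinal} (hα : α < δ) :
    (g '' Iic α).Finite := by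
  induction α using Ordinal.limitRecOn with
  | zero => simp [Iic, nonpos_iff_eq_zero]
  | add_one ξ ih =>
    rw [← Order.succ_eq_add_one] at hα ⊢
    rw [Order.Iic_succ, image_insert_eq]
    exact (ih ((Order.lt_succ ξ).trans hα)).insert _
  | limit α hlim ih =>
    obtain ⟨γ, hγα, hconst⟩ := hg α hα hlim
    refine ((ih γ hγα (hγα.trans hα)).insert (g α)).subset ?_
    rintro _ ⟨z, hz, rfl⟩
    rcases le_or_gt z γ with hzγ | hγz
    · exact mem_insert_of_mem _ ⟨z, hzγ, rfl⟩
    · rcases (mem_Iic.1 hz).lt_or_eq with hzα | rfl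
      · exact hconst z hγz.le hzα ▸ mem_insert _ _
      · exact mem_insert _ _

end IsContinuousBelow

lemma Measures.exists_tail_mem_iff {C : Set Ordinal} {Cs : Ordinal → Set Ordinal}
    (hC : Measures C Cs) {δ : Ordinal} (hδ : δ ∈ C) :
    ∃ α < δ, ∃ p : Prop, ∀ x ∈ C, x < δ → α ≤ x → (x ∈ Cs δ ↔ p) := by
  obtain ⟨α, hαδ, hin | hout⟩ := hC δ hδ
  · exact ⟨α, hαδ, True, fun x hxC hxδ hαx => iff_true_intro (hin x hxC hxδ hαx)⟩
  · exact ⟨α, hαδ, False, fun x hxC _ hαx => iff_false_intro (hout x hxC hαx)⟩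

lemma Set.Finite.exists_notMem_even_iff {F : Set ℕ} (hF : F.Finite) (p : Prop) :
    ∃ n ∉ F, (Even n ↔ p) := by
  obtain ⟨N, hN⟩ := hF.bddAbove
  have hfresh : ∀ n, N < n → n ∉ F := fun n hNn hnF => (hN hnF).not_gt hNn
  by_cases hp : p
  · exact ⟨2 * N + 2, hfresh _ (by omega), by simp [hp, parity_simps]⟩
  · exact ⟨2 * N + 1, hfresh _ (by omega), by simp [hp]⟩

/-- Measuring implies the negation of mho: for every sequence `(f_α)_{α<ω₁}` of continuous
functions `f_α : α → ω` there is a club `C ⊆ ω₁` such that `f_δ '' C ≠ ω` for all `δ ∈ C`. -/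
theorem measuring_implies_neg_mho (hM : Measuring)
    (f : Ordinal.{0} → Ordinal.{0} → ℕ)
    (hcont : ∀ α, α < omega1 → ∀ x, x < α → Order.IsSuccLimit x →
      ∃ β < x, ∀ y, β ≤ y → y < x → f α y = f α x) :
    ∃ C, IsClubOmega1 C ∧ ∀ δ ∈ C, ∃ n : ℕ, ∀ x ∈ C, x < δ → f δ x ≠ n := by
  have hfcont : ∀ δ < omega1, IsContinuousBelow (f δ) δ := hcont
  obtain ⟨C, hclub, hmeas⟩ := hM (fun δ => {x | x < δ ∧ f δ x ∈ {n | Even n}})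
    fun δ hδ => (hfcont δ hδ).isClosedIn_preimage _
  refine ⟨C, hclub, fun δ hδC => ?_⟩
  obtain ⟨α, hαδ, p, htail⟩ := hmeas.exists_tail_mem_iff hδC
  have hfin : (f δ '' Iic α).Finite := (hfcont δ (hclub.1.1 hδC)).finite_image_Iic hαδ
  obtain ⟨n, hnF, hnp⟩ := hfin.exists_notMem_even_iff (¬p)
  refine ⟨n, fun x hxC hxδ hfx => ?_⟩
  rcases le_or_gt α x with hαx | hxα
  · have hxp := htail x hxC hxδ hαx
    simp only [mem_ofPred_eq, hxδ, true_and, hfx] at hxp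
    exact (iff_not_self (hxp.symm.trans hnp)).elim
  · exact hnF ⟨x, hxα.le, hfx⟩
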